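/- For every i in Z/3 the following four equivalences hold in SK: b_{i-1}^2 a_i d_{i-1}^2 ~ (b_{i-1} a_i d_{i-1}) d_i^2 (b_{i-1} b_i d_{i-1}) b_i; b_{i-1}^2 c_i d_{i-1}^2 ~ d_i (b_{i-1} d_i d_{i-1}) b_i^2 (b_{i-1} c_i d_{i-1}); b_{i-1}^2 b_i d_{i-1}^2 ~ (b_{i-1} b_i d_{i-1}) d_i^2 (b_{i-1} b_i d_{i-1}) b_i; b_{i-1}^2 d_i d_{i-1}^2 ~ d_i (b_{i-1} d_i d_{i-1}) b_i^2 (b_{i-1} d_i d_{i-1}). -/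

import Mathlib

/-- The 15-letter alphabet A = {a_i, b_i, c_i, d_i, x_i : i ∈ ℤ/3}. -/
inductive Letter : Type
  | a : ZMod 3 → Letter
  | b : ZMod 3 → Letter
  | c : ZMod 3 → Letter
  | d : ZMod 3 → Letter
  | x : ZMod 3 → Letter
  deriving DecidableEq

/-- Words: the free monoid on the alphabet A. -/
abbrev Word := FreeMonoid Letter

def a (i : ZMod 3) : Word := FreeMonoid.of (Letter.a i)
def b (i : ZMod 3) : Word := FreeMonoid.of (Letter.b i)
def c (i : ZMod 3) : Word := FreeMonoid.of (Letter.c i)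
def d (i : ZMod 3) : Word := FreeMonoid.of (Letter.d i)
def x (i : ZMod 3) : Word := FreeMonoid.of (Letter.x i)

/-- t_i = b_{i+1} d_{i-1} d_{i+1} b_{i-1}. -/
def t (i : ZMod 3) : Word := b (i+1) * d (i-1) * d (i+1) * b (i-1)

/-- t'_i = d_{i-1} b_{i+1} b_{i-1} d_{i+1}. -/
def t' (i : ZMod 3) : Word := d (i-1) * b (i+1) * b (i-1) * d (i+1)

/-- The defining relations (1)-(10) of the semigroup SK. -/
inductive SKRel : Word → Word → Prop
  | r1a (i : ZMod 3) : SKRel (a i) (a (i+1) * d (i-1))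
  | r1b (i : ZMod 3) : SKRel (b i) (a (i-1) * c (i+1))
  | r1c (i : ZMod 3) : SKRel (c i) (b (i-1) * c (i+1))
  | r1d (i : ZMod 3) : SKRel (d i) (a (i+1) * c (i-1))
  | r2 (i : ZMod 3) : SKRel (x i) (d (i+1) * x (i-1) * b (i+1))
  | r3 : SKRel (d 0 * d 1 * d 2) 1
  | r4bd (i : ZMod 3) : SKRel (b i * d i) 1
  | r4db (i : ZMod 3) : SKRel (d i * b i) 1
  | r5d (i : ZMod 3) : SKRel (d i * x i * d i) (a i * (d i * x i * d i) * c i)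
  | r5b (i : ZMod 3) : SKRel (b i * x i * b i) (a i * (b i * x i * b i) * c i)
  | r6 (i : ZMod 3) :
      SKRel (x i * (d (i+1) * d i * d (i-1))) ((d (i+1) * d i * d (i-1)) * x i)
  | r7 (i : ZMod 3) (w : Word)
      (hw : w ∈ ({c (i+1), x (i+1), b i * d (i+1) * d i} : Set Word)) :
      SKRel ((d i * c i) * w) (w * (d i * c i))
  | r8 (i : ZMod 3) (w : Word)
      (hw : w ∈ ({a (i+1), b (i+1), c (i+1), x (i+1), b i * d (i+1) * d i} : Set Word)) :
      SKRel ((a i * b i) * w) (w * (a i * b i))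
  | r9 (i : ZMod 3) (w : Word)
      (hw : w ∈ ({a i, b i, c i, x i, b (i-1) * d i * d (i-1)} : Set Word)) :
      SKRel (t i * w) (w * t i)
  | r10 (i : ZMod 3) (w : Word)
      (hw : w ∈ ({a (i+1), b (i+1), c (i+1), x (i+1), b i * d (i+1) * d i} : Set Word)) :
      SKRel ((d i * x i * b i) * w) (w * (d i * x i * b i))

/-- The congruence generated by relations (1)-(10); `skCon u v` means u ~ v,
i.e. u and v have equal images in the presented monoid SK. -/
def skCon : Con Word := conGen SKRel

/-!
The letters `d i` are units of `SK` with inverses `b i`, and `d i * d (i + 1) * d (i - 1) = 1`.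
With `D = d i` and `E = d (i - 1)`, relation (9) for `t (i + 1)` says that `E⁻¹ D E D⁻¹` commutes
with `E D = b (i + 1)`; in the free group on `D, E`, identity (44) is a conjugate of this
commutator relation, and (43) is its inverse. Finally `a i = (a (i + 1) * b (i + 1)) * b i` and
`c i = d i * (d (i + 1) * c (i + 1))`, where the bracketed factors commute with `b (i - 1)`,
resp. `d (i - 1)`, by relations (1), (7), (8); so (41) and (42) are (43) and (44) multiplied by
these factors.
-/

theorem conj_sq_eq_of_commute {G : Type*} [Group G] {D E : G}
    (h : Commute (E⁻¹ * D * E * D⁻¹) (E * D)) :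
    E⁻¹ ^ 2 * D * E ^ 2 = D * (E⁻¹ * D * E) * D⁻¹ ^ 2 * (E⁻¹ * D * E) := by
  refine (mul_inv_eq_one.mp ?_).symm
  calc _ = E⁻¹ * (E⁻¹ * D * E * D⁻¹ * (E * D) * (E⁻¹ * D * E * D⁻¹)⁻¹ * (E * D)⁻¹)⁻¹ * E := by
        simp only [mul_inv_rev, inv_inv, mul_assoc, sq, inv_mul_cancel_left, mul_inv_cancel_left]
    _ = 1 := by rw [h.eq]; group

theorem conj_sq_inv_eq_of_commute {G : Type*} [Group G] {D E : G}
    (h : Commute (E⁻¹ * D * E * D⁻¹) (E * D)) :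
    E⁻¹ ^ 2 * D⁻¹ * E ^ 2 = E⁻¹ * D⁻¹ * E * D ^ 2 * (E⁻¹ * D⁻¹ * E) * D⁻¹ := by
  calc _ = (E⁻¹ ^ 2 * D * E ^ 2)⁻¹ := by group
    _ = (D * (E⁻¹ * D * E) * D⁻¹ ^ 2 * (E⁻¹ * D * E))⁻¹ := by rw [conj_sq_eq_of_commute h]
    _ = _ := by group

theorem Commute.sandwich_left_comm {M : Type*} [Monoid M] {p u : M} (h : Commute p u) (z v : M) :
    u * (p * z) * v = p * (u * z * v) := by
  simp only [← mul_assoc, h.eq]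

theorem Commute.sandwich_right_comm {M : Type*} [Monoid M] {q v : M} (h : Commute q v) (u z : M) :
    u * (z * q) * v = u * z * v * q := by
  simp only [mul_assoc, h.eq]

theorem ZMod.three_add_one_add_one (i : ZMod 3) : i + 1 + 1 = i - 1 := by
  revert i; decide

theorem ZMod.three_sub_one_sub_one (i : ZMod 3) : i - 1 - 1 = i + 1 := by
  revert i; decide

abbrev SK := skCon.Quotient

namespace SK

theorem mk_eq_of_rel {u v : Word} (h : SKRel u v) : (u : SK) = v :=
  (Con.eq _).mpr (ConGen.Rel.of _ _ h)

def dUnit (i : ZMod 3) : SKˣ where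
  val := d i
  inv := b i
  val_inv := mk_eq_of_rel (.r4db i)
  inv_val := mk_eq_of_rel (.r4bd i)

@[simp] theorem val_dUnit (i : ZMod 3) : (dUnit i : SK) = d i := rfl

@[simp] theorem val_dUnit_inv (i : ZMod 3) : ((dUnit i)⁻¹ : SKˣ) = (b i : SK) := rfl

theorem dUnit_mul_mul (i : ZMod 3) : dUnit i * dUnit (i + 1) * dUnit (i - 1) = 1 := by
  have h : dUnit 0 * dUnit 1 * dUnit 2 = 1 := Units.ext (mk_eq_of_rel .r3)
  fin_cases i
  · exact h
  · change dUnit 1 * dUnit 2 * dUnit 0 = 1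
    rwa [mul_eq_one_comm, ← mul_assoc]
  · change dUnit 2 * dUnit 0 * dUnit 1 = 1
    rwa [mul_assoc, mul_eq_one_comm]

theorem b_mul_d (i : ZMod 3) : (b i : SK) * d i = 1 := (dUnit i).inv_val

theorem b_add_one (i : ZMod 3) : (b (i + 1) : SK) = d (i - 1) * d i := by
  have h : (dUnit (i + 1))⁻¹ = dUnit (i - 1) * dUnit i :=
    inv_eq_of_mul_eq_one_right <| by
      rw [← mul_assoc, ← mul_eq_one_comm, ← mul_assoc]
      exact dUnit_mul_mul i
  simpa using congrArg Units.val h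

theorem d_add_one_mul_d_sub_one (i : ZMod 3) : (d (i + 1) : SK) * d (i - 1) = b i := by
  have h : dUnit (i + 1) * dUnit (i - 1) = (dUnit i)⁻¹ :=
    eq_inv_of_mul_eq_one_right (by rw [← mul_assoc]; exact dUnit_mul_mul i)
  simpa using congrArg Units.val h

theorem d_mul_d_add_one (i : ZMod 3) : (d i : SK) * d (i + 1) = b (i - 1) := by
  have h : dUnit i * dUnit (i + 1) = (dUnit (i - 1))⁻¹ :=
    eq_inv_of_mul_eq_one_left (dUnit_mul_mul i)
  simpa using congrArg Units.val h

theorem a_eq_a_mul_b_mul_b (i : ZMod 3) : (a i : SK) = a (i + 1) * b (i + 1) * b i := by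
  calc (a i : SK) = a (i + 1) * d (i - 1) := mk_eq_of_rel (.r1a i)
    _ = a (i + 1) * (b (i + 1) * d (i + 1)) * d (i - 1) := by rw [b_mul_d, mul_one]
    _ = _ := by simp only [mul_assoc, d_add_one_mul_d_sub_one]

theorem d_sub_one_eq_a_mul_b_mul_c (i : ZMod 3) : (d (i - 1) : SK) = a i * b i * c (i - 1) := by
  have hd : (d (i - 1) : SK) = a i * c (i + 1) := by
    simpa [ZMod.three_sub_one_sub_one] using mk_eq_of_rel (.r1d (i - 1))
  have hc : (c (i + 1) : SK) = b i * c (i - 1) := by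
    simpa [ZMod.three_add_one_add_one] using mk_eq_of_rel (.r1c (i + 1))
  rw [hd, hc, mul_assoc]

theorem c_eq_d_mul_d_mul_c (i : ZMod 3) : (c i : SK) = d i * (d (i + 1) * c (i + 1)) := by
  rw [← mul_assoc, d_mul_d_add_one]
  exact mk_eq_of_rel (.r1c i)

theorem commute_a_mul_b_b_add_one (i : ZMod 3) : Commute (a i * b i : SK) (b (i + 1)) :=
  mk_eq_of_rel (.r8 i _ (by simp))

theorem commute_a_mul_b_c_add_one (i : ZMod 3) : Commute (a i * b i : SK) (c (i + 1)) :=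
  mk_eq_of_rel (.r8 i _ (by simp))

theorem commute_d_mul_c_c_add_one (i : ZMod 3) : Commute (d i * c i : SK) (c (i + 1)) :=
  mk_eq_of_rel (.r7 i _ (by simp))

theorem commute_t_b (i : ZMod 3) : Commute (t i : SK) (b i) :=
  mk_eq_of_rel (.r9 i _ (by simp))

theorem commute_d_mul_c_add_one_d_sub_one (i : ZMod 3) :
    Commute (d (i + 1) * c (i + 1) : SK) (d (i - 1)) := by
  have hd : Commute (a i * b i : SK) (d (i + 1)) :=
    (Commute.units_inv_right_iff (u := dUnit (i + 1))).mp (commute_a_mul_b_b_add_one i)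
  have hc : Commute (d (i + 1) * c (i + 1) : SK) (c (i - 1)) := by
    simpa [ZMod.three_add_one_add_one] using commute_d_mul_c_c_add_one (i + 1)
  rw [d_sub_one_eq_a_mul_b_mul_c]
  exact (hd.mul_right (commute_a_mul_b_c_add_one i)).symm.mul_right hc

theorem commute_dUnit_commutator (i : ZMod 3) :
    Commute ((dUnit (i - 1))⁻¹ * dUnit i * dUnit (i - 1) * (dUnit i)⁻¹)
      (dUnit (i - 1) * dUnit i) := by
  rw [← Commute.units_val_iff]
  -- the two factors are `t (i + 1)` and `b (i + 1)`
  simpa [t, ZMod.three_add_one_add_one, b_add_one] using commute_t_b (i + 1)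

theorem conj_sq_d (i : ZMod 3) :
    (b (i - 1) : SK) ^ 2 * d i * d (i - 1) ^ 2 =
      d i * (b (i - 1) * d i * d (i - 1)) * b i ^ 2 * (b (i - 1) * d i * d (i - 1)) := by
  simpa using congrArg Units.val (conj_sq_eq_of_commute (commute_dUnit_commutator i))

theorem conj_sq_b (i : ZMod 3) :
    (b (i - 1) : SK) ^ 2 * b i * d (i - 1) ^ 2 =
      b (i - 1) * b i * d (i - 1) * d i ^ 2 * (b (i - 1) * b i * d (i - 1)) * b i := by
  simpa using congrArg Units.val (conj_sq_inv_eq_of_commute (commute_dUnit_commutator i))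

theorem conj_sq_a (i : ZMod 3) :
    (b (i - 1) : SK) ^ 2 * a i * d (i - 1) ^ 2 =
      b (i - 1) * a i * d (i - 1) * d i ^ 2 * (b (i - 1) * b i * d (i - 1)) * b i := by
  have hp : Commute (a (i + 1) * b (i + 1) : SK) (b (i - 1)) := by
    simpa [ZMod.three_add_one_add_one] using commute_a_mul_b_b_add_one (i + 1)
  rw [a_eq_a_mul_b_mul_b i, (hp.pow_right 2).sandwich_left_comm, hp.sandwich_left_comm, conj_sq_b]
  simp only [mul_assoc]

theorem conj_sq_c (i : ZMod 3) :
    (b (i - 1) : SK) ^ 2 * c i * d (i - 1) ^ 2 =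
      d i * (b (i - 1) * d i * d (i - 1)) * b i ^ 2 * (b (i - 1) * c i * d (i - 1)) := by
  have hq := commute_d_mul_c_add_one_d_sub_one i
  rw [c_eq_d_mul_d_mul_c i, (hq.pow_right 2).sandwich_right_comm, hq.sandwich_right_comm, conj_sq_d]
  simp only [mul_assoc]

end SK

/-- (41)-(44). -/
theorem equiv_41_44 : ∀ i : ZMod 3,
    skCon (b (i-1)^2 * a i * d (i-1)^2)
          ((b (i-1) * a i * d (i-1)) * d i^2 * (b (i-1) * b i * d (i-1)) * b i) ∧
    skCon (b (i-1)^2 * c i * d (i-1)^2)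
          (d i * (b (i-1) * d i * d (i-1)) * b i^2 * (b (i-1) * c i * d (i-1))) ∧
    skCon (b (i-1)^2 * b i * d (i-1)^2)
          ((b (i-1) * b i * d (i-1)) * d i^2 * (b (i-1) * b i * d (i-1)) * b i) ∧
    skCon (b (i-1)^2 * d i * d (i-1)^2)
          (d i * (b (i-1) * d i * d (i-1)) * b i^2 * (b (i-1) * d i * d (i-1))) := fun i =>
  ⟨(Con.eq _).mp (SK.conj_sq_a i), (Con.eq _).mp (SK.conj_sq_c i),
    (Con.eq _).mp (SK.conj_sq_b i), (Con.eq _).mp (SK.conj_sq_d i)⟩
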